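/- arXiv:math/0212282 — 2 statements merged into one kernel-verified Lean document; each statement's English description precedes it below -/
import Mathlib

section
/- Let K be a field of characteristic 0, G a group, and ρ : G → GL(V) a finite-dimensional semisimple representation over K whose isotypic components are sums of absolutely irreducible representations. Let A ⊆ K be a Noetherian integral domain with Frac(A) = K such that tr(ρ(g)) ∈ A for all g ∈ G. Then the image of the group algebra A[G] in End_K(V) is a finitely generated A-module. -/
/-!
The trace form `(x, y) ↦ tr (x y)` is nondegenerate on the `K`-span `E` of `ρ(G)`, which is a
subalgebra of `End_K(V)`. Indeed, its radical is a left ideal of `E` whose elements have traceless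
powers, hence are nilpotent in characteristic zero; a nil left ideal lies in the Jacobson radical,
and the Jacobson radical of `E` annihilates the semisimple `E`-module `V`.

Pick a basis `ρ(g₁), …, ρ(gₙ)` of `E` and its trace-dual basis `e₁, …, eₙ`. Then
`ρ(g) = ∑ tr (ρ(g gᵢ)) • eᵢ` has coefficients in `A`, so the `A`-span of `ρ(G)` is a submodule of
the finitely generated `A`-module spanned by the `eᵢ`, and `A` is Noetherian.
-/

open LinearMap Module

theorem Ideal.le_ringJacobson_of_isNilpotent {R : Type*} [Ring R] {I : Ideal R}
    (hI : ∀ x ∈ I, IsNilpotent x) : I ≤ Ring.jacobson R := by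
  intro x hx
  rw [← Ideal.jacobson_bot, Ideal.mem_jacobson_iff]
  intro y
  obtain ⟨u, hu⟩ := (hI _ (I.mul_mem_left y hx)).isUnit_add_one
  refine ⟨↑u⁻¹, ?_⟩
  rw [Ideal.mem_bot, mul_assoc, sub_eq_zero, ← mul_add_one, ← hu, Units.inv_mul]

section TraceForm

variable {K V : Type*} [Field K] [CharZero K] [AddCommGroup V] [Module K V] [FiniteDimensional K V]

theorem Module.End.det_eq_zero_of_trace_pow_eq_zero [Nontrivial V] {f : End K V}
    (hf : ∀ n, 0 < n → trace K V (f ^ n) = 0) : LinearMap.det f = 0 := by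
  -- Cayley–Hamilton under the trace: only the constant term survives, as `c₀ * dim V = 0`.
  have h := congrArg (trace K V) (LinearMap.aeval_self_charpoly f)
  rw [Polynomial.aeval_eq_sum_range, map_sum, Finset.sum_eq_single 0
    (fun i _ hi => by rw [map_smul, hf i (Nat.pos_of_ne_zero hi), smul_zero]) (by simp)] at h
  simp only [pow_zero, map_smul, trace_one, smul_eq_mul, map_zero, mul_eq_zero, Nat.cast_eq_zero,
    finrank_pos.ne', or_false] at h
  rw [LinearMap.det_eq_sign_charpoly_coeff, h, mul_zero]

theorem Module.End.isNilpotent_of_trace_pow_eq_zero {f : End K V}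
    (hf : ∀ n, 0 < n → trace K V (f ^ n) = 0) : IsNilpotent f := by
  induction h : finrank K V using Nat.strong_induction_on generalizing V with
  | _ d ih =>
  rcases subsingleton_or_nontrivial V with _ | _
  · exact ⟨1, Subsingleton.elim _ _⟩
  have hmaps : ∀ x ∈ range f, f x ∈ range f := fun x _ => mem_range_self f x
  have hlt : finrank K (range f) < d :=
    h ▸ Submodule.finrank_lt (range_lt_top_of_det_eq_zero (det_eq_zero_of_trace_pow_eq_zero hf)).ne
  have hg : ∀ n, 0 < n → trace K (range f) (f.restrict hmaps ^ n) = 0 := fun n hn => by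
    obtain ⟨m, rfl⟩ := Nat.exists_eq_add_of_lt hn
    rw [pow_restrict, trace_restrict_eq_of_forall_mem _ _ (fun x => ?_), hf _ hn]
    rw [zero_add, pow_succ', mul_apply]
    exact mem_range_self f _
  obtain ⟨k, hk⟩ := ih _ hlt hg rfl
  refine ⟨k + 1, LinearMap.ext fun v => ?_⟩
  have hfv := congrArg Subtype.val (LinearMap.congr_fun hk ⟨f v, mem_range_self f v⟩)
  rw [pow_restrict, restrict_apply, LinearMap.zero_apply] at hfv
  rw [pow_succ, mul_apply]
  exact hfv

theorem Subalgebra.eq_zero_of_forall_trace_mul_eq_zero (E : Subalgebra K (End K V))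
    [IsSemisimpleModule E V] {x : End K V} (hx : x ∈ E)
    (h : ∀ y ∈ E, trace K V (x * y) = 0) : x = 0 := by
  let N : Ideal E :=
    { carrier := {a | ∀ y ∈ E, trace K V (a * y) = 0}
      add_mem' := fun ha hb y hy => by
        rw [Subalgebra.coe_add, add_mul, map_add, ha y hy, hb y hy, add_zero]
      zero_mem' := fun y _ => by rw [Subalgebra.coe_zero, zero_mul, map_zero]
      smul_mem' := fun c a ha y hy => by
        rw [smul_eq_mul, Subalgebra.coe_mul, trace_mul_cycle, trace_mul_comm]
        exact ha _ (E.mul_mem hy c.2) }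
  have hN_nil : ∀ a ∈ N, IsNilpotent a := fun a ha => by
    rw [← IsNilpotent.map_iff (f := E.val) Subtype.val_injective]
    refine Module.End.isNilpotent_of_trace_pow_eq_zero fun n hn => ?_
    obtain ⟨m, rfl⟩ := Nat.exists_eq_add_of_lt hn
    rw [zero_add, pow_succ']
    exact ha _ (E.pow_mem a.2 m)
  have hx_ann : (⟨x, hx⟩ : E) ∈ annihilator E V :=
    IsSemisimpleModule.jacobson_le_annihilator E V
      (Ideal.le_ringJacobson_of_isNilpotent hN_nil h)
  ext v
  exact mem_annihilator.mp hx_ann v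

end TraceForm

namespace Representation

variable {K G V : Type*} [Field K] [Monoid G] [AddCommGroup V] [Module K V]
  (ρ : Representation K G V)

theorem adjoin_range_toSubmodule :
    Subalgebra.toSubmodule (Algebra.adjoin K (Set.range ρ)) = Submodule.span K (Set.range ρ) := by
  rw [Algebra.adjoin_eq_span, MonoidHom.mclosure_range, MonoidHom.coe_mrange]

theorem apply_mem_of_mem_adjoin_range {W : Submodule K V} (hW : ∀ g, ∀ x ∈ W, ρ g x ∈ W)
    {a : End K V} (ha : a ∈ Algebra.adjoin K (Set.range ρ)) {x : V} (hx : x ∈ W) : a x ∈ W := by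
  induction ha using Algebra.adjoin_induction generalizing x with
  | mem a ha => obtain ⟨g, rfl⟩ := ha; exact hW g x hx
  | algebraMap c => exact W.smul_mem c hx
  | add a b _ _ ha hb => exact W.add_mem (ha hx) (hb hx)
  | mul a b _ _ ha hb => exact ha (hb hx)

theorem isSemisimpleModule_adjoin_range
    (hss : ∀ W : Submodule K V, (∀ g, ∀ x ∈ W, ρ g x ∈ W) →
      ∃ U : Submodule K V, (∀ g, ∀ x ∈ U, ρ g x ∈ U) ∧ IsCompl W U) :
    IsSemisimpleModule (Algebra.adjoin K (Set.range ρ)) V := by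
  refine { exists_isCompl := fun p => ?_ }
  obtain ⟨U, hU, hpU⟩ := hss (p.restrictScalars K)
    fun g x hx => p.smul_mem ⟨ρ g, Algebra.subset_adjoin ⟨g, rfl⟩⟩ hx
  let U' : Submodule (Algebra.adjoin K (Set.range ρ)) V :=
    { U with smul_mem' := fun a _ hx => apply_mem_of_mem_adjoin_range ρ hU a.2 hx }
  exact ⟨U', (Submodule.isCompl_restrictScalars_iff K).mp hpU⟩

end Representation

theorem Submodule.fg_span_of_nondegenerate_restrict {A K M : Type*} [CommRing A]
    [IsNoetherianRing A] [Field K] [Algebra A K] [AddCommGroup M] [Module K M] [Module A M]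
    [IsScalarTower A K M] (B : LinearMap.BilinForm K M) {S : Set M}
    [FiniteDimensional K (span K S)] (hB : (B.restrict (span K S)).Nondegenerate)
    (hBS : ∀ s ∈ S, ∀ t ∈ S, B s t ∈ (algebraMap A K).range) :
    (span A S).FG := by
  classical
  obtain ⟨T, hTS, hT_span, hT_li⟩ := exists_linearIndependent K S
  let b : Basis T K (span K S) :=
    (Basis.span hT_li).map (LinearEquiv.ofEq _ _ (by rw [Subtype.range_coe, hT_span]))
  have : Fintype T := @Fintype.ofFinite T (Module.Finite.finite_basis b)
  let d := (B.restrict (span K S)).dualBasis hB b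
  refine (fg_span (Set.finite_range fun i => (d i : M))).of_le (span_le.mpr fun s hs => ?_)
  have hs_eq : s = ∑ i : T, B s i • (d i : M) := by
    simpa [b, d] using congrArg Subtype.val (d.sum_repr ⟨s, subset_span hs⟩).symm
  rw [SetLike.mem_coe, hs_eq]
  refine sum_mem fun i _ => ?_
  obtain ⟨a, ha⟩ := hBS s hs i (hTS i.2)
  rw [← ha, algebraMap_smul]
  exact smul_mem _ _ (subset_span ⟨i, rfl⟩)

theorem image_of_group_algebra_finitely_generated_general
    (K : Type*) [Field K] [CharZero K]
    (G : Type*) [Group G]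
    (V : Type*) [AddCommGroup V] [Module K V] [FiniteDimensional K V]
    (ρ : Representation K G V)
    -- semisimplicity: every `G`-stable subspace has a `G`-stable complement
    (hss : ∀ W : Submodule K V, (∀ g : G, ∀ x ∈ W, ρ g x ∈ W) →
      ∃ U : Submodule K V, (∀ g : G, ∀ x ∈ U, ρ g x ∈ U) ∧ IsCompl W U)
    (A : Type*) [CommRing A] [IsNoetherianRing A]
    [Algebra A K]
    [Module A V] [IsScalarTower A K V] [SMulCommClass K A V]
    (htr : ∀ g : G, ∃ a : A, algebraMap A K a = LinearMap.trace K V (ρ g)) :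
    (Submodule.span A (Set.range fun g : G => (ρ g : V →ₗ[K] V))).FG := by
  have := ρ.isSemisimpleModule_adjoin_range hss
  have hE := ρ.adjoin_range_toSubmodule
  refine Submodule.fg_span_of_nondegenerate_restrict ((mul K (End K V)).compr₂ (trace K V))
    (.ofSeparatingLeft fun ⟨x, hx⟩ hx0 => ?_) ?_
  · rw [← hE, Subalgebra.mem_toSubmodule] at hx
    exact Subtype.ext <| Subalgebra.eq_zero_of_forall_trace_mul_eq_zero _ hx fun y hy =>
      hx0 ⟨y, hE ▸ hy⟩
  · rintro _ ⟨g, rfl⟩ _ ⟨h, rfl⟩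
    obtain ⟨a, ha⟩ := htr (g * h)
    exact ⟨a, by simpa using ha⟩

/-- Let `K` be a field of characteristic 0, `G` a group, `ρ : G → GL(V)` a finite-dimensional
semisimple representation over `K` whose irreducible constituents are absolutely irreducible
(condition (ABS)).  Let `A ⊆ K` be a Noetherian integral domain with `Frac(A) = K` such that all
traces `tr ρ(g)` lie in `A`.  Then the image of `A[G]` in `End_K(V)`, i.e. the `A`-submodule of
`End_K(V)` generated by the `ρ(g)`, is a finitely generated `A`-module. -/
theorem image_of_group_algebra_finitely_generated
    (K : Type*) [Field K] [CharZero K]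
    (G : Type*) [Group G]
    (V : Type*) [AddCommGroup V] [Module K V] [FiniteDimensional K V]
    (ρ : Representation K G V)
    -- semisimplicity: every `G`-stable subspace has a `G`-stable complement
    (hss : ∀ W : Submodule K V, (∀ g : G, ∀ x ∈ W, ρ g x ∈ W) →
      ∃ U : Submodule K V, (∀ g : G, ∀ x ∈ U, ρ g x ∈ U) ∧ IsCompl W U)
    -- (ABS): every irreducible `G`-stable subspace is absolutely irreducible, i.e. its
    -- `G`-equivariant endomorphisms are scalars
    (habs : ∀ (W : Submodule K V) (hW : ∀ g : G, ∀ x ∈ W, ρ g x ∈ W), W ≠ ⊥ →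
      (∀ U : Submodule K V, U ≤ W → (∀ g : G, ∀ x ∈ U, ρ g x ∈ U) → U = ⊥ ∨ U = W) →
      ∀ f : W →ₗ[K] W, (∀ (g : G) (x : W), (f ⟨ρ g x, hW g x x.2⟩ : V) = ρ g (f x)) →
        ∃ c : K, ∀ x : W, f x = c • x)
    (A : Type*) [CommRing A] [IsDomain A] [IsNoetherianRing A]
    [Algebra A K] [IsFractionRing A K]
    [Module A V] [IsScalarTower A K V] [SMulCommClass K A V]
    (htr : ∀ g : G, ∃ a : A, algebraMap A K a = LinearMap.trace K V (ρ g)) :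
    (Submodule.span A (Set.range fun g : G => (ρ g : V →ₗ[K] V))).FG :=
  image_of_group_algebra_finitely_generated_general K G V ρ hss A htr
end

section
/- Let K be a field, V a K-vector space of dimension d, and ρ : G → GL(V) an absolutely irreducible representation of a group G. Then there exist elements g_1, …, g_{d²} ∈ G such that the endomorphisms ρ(g_1), …, ρ(g_{d²}) form a K-basis of End_K(V), and the d² × d² matrix M with entries M_{k,l} = tr(ρ(g_k g_l)) is invertible. -/
/-!
Over `K̄` the representation is irreducible, so by Burnside's theorem (Schur's lemma together
with the Jacobson density theorem) the operators `ρ(g) ⊗ K̄` span `End_K̄(K̄ ⊗ V)`. Any `d²` of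
them that are `K̄`-linearly independent come from `K`-linearly independent `ρ(gᵢ)`, which then
form a `K`-basis of `End_K(V)`. In this basis, `(tr(ρ(g_k g_l)))` is the Gram matrix of the
nondegenerate trace form `(x, y) ↦ tr(xy)`, hence invertible.
-/

open Module

theorem Subalgebra.eq_top_of_isSimpleModule {k V : Type*} [Field k] [IsAlgClosed k]
    [AddCommGroup V] [Module k V] [FiniteDimensional k V]
    (A : Subalgebra k (End k V)) [IsSimpleModule A V] : A = ⊤ := by
  have : Module.Finite (End A V) V := .of_restrictScalars_finite k _ _
  have hscalar := (IsSimpleModule.algebraMap_end_bijective_of_isAlgClosed k (A := A) (V := V)).2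
  refine eq_top_iff.mpr fun f _ => ?_
  let f' : End (End A V) V :=
    { toFun := f
      map_add' := f.map_add
      map_smul' := fun φ v => by
        obtain ⟨c, rfl⟩ := hscalar φ
        simp }
  obtain ⟨a, ha⟩ := Module.Finite.toModuleEnd_moduleEnd_surjective f'
  convert a.2
  exact LinearMap.ext fun v => congr($ha v).symm

theorem Representation.span_range_eq_top_of_isAlgClosed {k G V : Type*} [Field k] [IsAlgClosed k]
    [Monoid G] [AddCommGroup V] [Module k V] [FiniteDimensional k V] (ρ : Representation k G V)
    (hirr : ∀ U : Submodule k V, (∀ g : G, ∀ x ∈ U, ρ g x ∈ U) → U = ⊥ ∨ U = ⊤) :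
    Submodule.span k (Set.range ρ) = ⊤ := by
  rcases subsingleton_or_nontrivial V with _ | _
  · exact Subsingleton.elim _ _
  let A := Algebra.adjoin k (Set.range ρ)
  have : IsSimpleModule A V := by
    refine { eq_bot_or_eq_top := fun U => ?_ }
    have hU := hirr (U.restrictScalars k) fun g x hx =>
      U.smul_mem ⟨ρ g, Algebra.subset_adjoin ⟨g, rfl⟩⟩ hx
    rwa [Submodule.restrictScalars_eq_bot_iff, Submodule.restrictScalars_eq_top_iff] at hU
  have hA : Subalgebra.toSubmodule A = Submodule.span k (Set.range ρ) := by
    rw [Algebra.adjoin_eq_span, ← MonoidHom.coe_mrange, Submonoid.closure_eq]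
  rw [← hA, Algebra.toSubmodule_eq_top]
  exact Subalgebra.eq_top_of_isSimpleModule A

theorem exists_linearIndependent_comp_fin_of_span_eq_top {K M ι : Type*} [DivisionRing K]
    [AddCommGroup M] [Module K M] [FiniteDimensional K M] {v : ι → M}
    (hv : Submodule.span K (Set.range v) = ⊤) {n : ℕ} (hn : finrank K M = n) :
    ∃ a : Fin n → ι, LinearIndependent K (v ∘ a) := by
  obtain ⟨κ, a, -, hsp, hli⟩ := exists_linearIndependent' K v
  let b : Basis κ K M := .mk hli (by rw [hsp, hv])
  have : Finite κ := Module.Finite.finite_basis b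
  let e : κ ≃ Fin n := Finite.equivFinOfCardEq (by rw [← hn, finrank_eq_nat_card_basis b])
  exact ⟨a ∘ e.symm, hli.comp _ e.symm.injective⟩

theorem LinearIndependent.of_baseChange {K L V W ι : Type*} [CommRing K] [CommRing L]
    [Algebra K L] [FaithfulSMul K L] [AddCommGroup V] [Module K V] [AddCommGroup W] [Module K W]
    {f : ι → V →ₗ[K] W} (h : LinearIndependent L fun i => (f i).baseChange L) :
    LinearIndependent K f :=
  .of_comp (LinearMap.baseChangeHom K L V W) (h.restrict_scalars' K)

namespace Module.End

variable (R M : Type*) [CommRing R] [AddCommGroup M] [Module R M]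

noncomputable def traceForm : LinearMap.BilinForm R (End R M) :=
  (LinearMap.mul R (End R M)).compr₂ (LinearMap.trace R M)

variable {R M}

@[simp]
theorem traceForm_apply (f g : End R M) : traceForm R M f g = LinearMap.trace R M (f * g) := rfl

variable [Module.Free R M] [Module.Finite R M]

theorem traceForm_separatingLeft : (traceForm R M).SeparatingLeft := by
  intro f hf
  let b := Module.Free.chooseBasis R M
  refine (LinearMap.toMatrix b b).injective (Matrix.ext_iff_trace_mul_right.mpr fun x => ?_)
  simpa [LinearMap.trace_eq_matrix_trace R b, LinearMap.toMatrix_mul] using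
    hf (Matrix.toLin b b x)

theorem traceForm_nondegenerate : (traceForm R M).Nondegenerate := by
  refine ⟨traceForm_separatingLeft, fun g hg => traceForm_separatingLeft g fun f => ?_⟩
  rw [traceForm_apply, LinearMap.trace_mul_comm]
  exact hg f

theorem isUnit_matrix_trace_mul_of_basis {K V ι : Type*} [Field K] [AddCommGroup V] [Module K V]
    [FiniteDimensional K V] [Fintype ι] [DecidableEq ι] (b : Basis ι K (End K V)) :
    IsUnit (Matrix.of fun i j => LinearMap.trace K V (b i * b j)) := by
  have hB := (LinearMap.BilinForm.nondegenerate_toMatrix_iff b).mpr traceForm_nondegenerate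
  rw [Matrix.nondegenerate_iff_det_ne_zero] at hB
  convert (Matrix.isUnit_iff_isUnit_det _).mpr hB.isUnit
  ext i j
  simp [LinearMap.BilinForm.toMatrix_apply]

end Module.End

open scoped TensorProduct

theorem exists_basis_of_images_and_trace_matrix_invertible_general
    (K : Type*) [Field K]
    (G : Type*) [Group G]
    (V : Type*) [AddCommGroup V] [Module K V] [FiniteDimensional K V]
    (ρ : Representation K G V)
    -- absolute irreducibility: the representation on `K̄ ⊗ V` is irreducible
    (habs : ∀ U : Submodule (AlgebraicClosure K) (AlgebraicClosure K ⊗[K] V),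
      (∀ g : G, ∀ x ∈ U, (ρ g).baseChange (AlgebraicClosure K) x ∈ U) → U = ⊥ ∨ U = ⊤) :
    ∃ g : Fin (Module.finrank K V * Module.finrank K V) → G,
      (LinearIndependent K fun i => (ρ (g i) : V →ₗ[K] V)) ∧
      Submodule.span K (Set.range fun i => (ρ (g i) : V →ₗ[K] V)) = ⊤ ∧
      IsUnit (Matrix.of fun i j => LinearMap.trace K V (ρ (g i * g j))) := by
  let L := AlgebraicClosure K
  let ρL : Representation L G (L ⊗[K] V) := (End.baseChangeHom K L V).toMonoidHom.comp ρ
  have hspan := ρL.span_range_eq_top_of_isAlgClosed habs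
  obtain ⟨g, hgL⟩ := exists_linearIndependent_comp_fin_of_span_eq_top
    (K := L) (M := End L (L ⊗[K] V)) hspan (n := finrank K V * finrank K V)
    (by rw [finrank_linearMap, finrank_baseChange])
  have hg : LinearIndependent K fun i => ρ (g i) := .of_baseChange hgL
  have hcard : Fintype.card (Fin (finrank K V * finrank K V)) = finrank K (End K V) := by
    rw [Fintype.card_fin, finrank_linearMap]
  refine ⟨g, hg, hg.span_eq_top_of_card_eq_finrank' hcard, ?_⟩
  simpa [map_mul] using
    End.isUnit_matrix_trace_mul_of_basis (basisOfLinearIndependentOfCardEqFinrank' _ hg hcard)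

/-- Let `K` be a field, `V` a `K`-vector space of dimension `d`, and `ρ : G → GL(V)` an
absolutely irreducible representation of a group `G` (i.e. the base change of `V` to an
algebraic closure of `K` is irreducible).  Then there exist `g₁, …, g_{d²} ∈ G` such that
`ρ(g₁), …, ρ(g_{d²})` form a `K`-basis of `End_K(V)`, and the `d² × d²` matrix `M` with
entries `M_{k,l} = tr(ρ(g_k g_l))` is invertible. -/
theorem exists_basis_of_images_and_trace_matrix_invertible
    (K : Type*) [Field K]
    (G : Type*) [Group G]
    (V : Type*) [AddCommGroup V] [Module K V] [FiniteDimensional K V]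
    (ρ : Representation K G V)
    -- absolute irreducibility: the representation on `K̄ ⊗ V` is irreducible
    (hV : (⊤ : Submodule (AlgebraicClosure K) (AlgebraicClosure K ⊗[K] V)) ≠ ⊥)
    (habs : ∀ U : Submodule (AlgebraicClosure K) (AlgebraicClosure K ⊗[K] V),
      (∀ g : G, ∀ x ∈ U, (ρ g).baseChange (AlgebraicClosure K) x ∈ U) → U = ⊥ ∨ U = ⊤) :
    ∃ g : Fin (Module.finrank K V * Module.finrank K V) → G,
      (LinearIndependent K fun i => (ρ (g i) : V →ₗ[K] V)) ∧
      Submodule.span K (Set.range fun i => (ρ (g i) : V →ₗ[K] V)) = ⊤ ∧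
      IsUnit (Matrix.of fun i j => LinearMap.trace K V (ρ (g i * g j))) :=
  exists_basis_of_images_and_trace_matrix_invertible_general K G V ρ habs
end
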